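/- Let G be a graph, B a PSD forcing set of G, and suppose v → w is a valid initial PSD force for B. Then B' = (B \ {v}) ∪ {w} is also a PSD forcing set of G (single-vertex migration). -/

import Mathlib

/-!
After the force `v → w`, the roles of `v` and `w` can be swapped: from `B' = (B \ {v}) ∪ {w}` the
vertex `w` forces `v`. Indeed, a white neighbour `x ≠ v` of `w` lies in the component of `w` in
`G - B`, and a path in `G - B'` from that component to `v` would have to enter `v` from a vertex of
the component other than `w`, contradicting the validity of `v → w`. So one round from `B'` already
colours all of `B`, and `B'` is forcing because forcing is monotone in the blue set.
-/

open SimpleGraph Set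

variable {V : Type*}

/-- The subgraph of `G` obtained by deleting the vertices of `B`
(kept as isolated vertices). -/
def delVerts (G : SimpleGraph V) (B : Set V) : SimpleGraph V where
  Adj a b := G.Adj a b ∧ a ∉ B ∧ b ∉ B
  symm := by
    first
    | exact fun _ _ ⟨h, ha, hb⟩ => ⟨h.symm, hb, ha⟩
    | exact ⟨fun _ _ ⟨h, ha, hb⟩ => ⟨h.symm, hb, ha⟩⟩
  loopless := ⟨fun a ⟨h, _, _⟩ => G.ne_of_adj h rfl⟩

/-- `u` may PSD-force `w` when the set of blue vertices is `B`:  `u` is blue, `w` is a white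
neighbor of `u`, and `w` is the unique white neighbor of `u` in the component of `G - B`
containing `w`. -/
def PSDForce (G : SimpleGraph V) (B : Set V) (u w : V) : Prop :=
  u ∈ B ∧ w ∉ B ∧ G.Adj u w ∧
    ∀ x, G.Adj u x → x ∉ B → (delVerts G B).Reachable x w → x = w

/-- One round of simultaneous PSD forcing starting from blue set `B`. -/
def psdStep (G : SimpleGraph V) (B : Set V) : Set V :=
  B ∪ {w | ∃ u, PSDForce G B u w}

/-- `B` is a PSD forcing set of `G`. -/
def IsPSDForcingSet (G : SimpleGraph V) (B : Set V) : Prop :=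
  ∃ t, (psdStep G)^[t] B = Set.univ

/-- The PSD propagation time `pt_+(G; B)` of the set `B` in `G`. -/
noncomputable def psdPropTime (G : SimpleGraph V) (B : Set V) : ℕ :=
  sInf {t | (psdStep G)^[t] B = Set.univ}

/-- The PSD zero forcing number `Z_+(G)`. -/
noncomputable def psdZ (G : SimpleGraph V) : ℕ :=
  sInf {k | ∃ B : Set V, IsPSDForcingSet G B ∧ B.ncard = k}

/-- The `k`-PSD propagation time `pt_+(G, k)`: the minimum of `pt_+(G; B)` over
PSD forcing sets `B` of size `k`. -/
noncomputable def psdPt (G : SimpleGraph V) (k : ℕ) : ℕ :=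
  sInf {t | ∃ B : Set V, IsPSDForcingSet G B ∧ B.ncard = k ∧ psdPropTime G B = t}

/-- The PSD propagation time `pt_+(G) = pt_+(G, Z_+(G))`. -/
noncomputable def psdPtG (G : SimpleGraph V) : ℕ := psdPt G (psdZ G)

/-- The PSD propagation time of `B` within the induced subgraph `G[U]` (for `B ⊆ U`),
realized by making the vertices outside `U` isolated and initially blue. -/
noncomputable def psdPropTimeOn (G : SimpleGraph V) (U B : Set V) : ℕ :=
  psdPropTime (delVerts G Uᶜ) (B ∪ Uᶜ)

/-- The vertex set of the component of `G - B` containing the white vertex `w`. -/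
def compOf (G : SimpleGraph V) (B : Set V) (w : V) : Set V :=
  {x | x ∉ B ∧ (delVerts G B).Reachable x w}

lemma delVerts_anti (G : SimpleGraph V) {B C : Set V} (h : B ⊆ C) :
    delVerts G C ≤ delVerts G B :=
  fun _ _ ⟨hadj, ha, hb⟩ => ⟨hadj, fun m => ha (h m), fun m => hb (h m)⟩

lemma psdStep_mono (G : SimpleGraph V) {B C : Set V} (h : B ⊆ C) :
    psdStep G B ⊆ psdStep G C := by
  rintro y (hy | ⟨u, hu, -, hadj, huniq⟩)
  · exact Or.inl (h hy)
  by_cases hyC : y ∈ C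
  · exact Or.inl hyC
  · exact Or.inr ⟨u, h hu, hyC, hadj, fun x hx hxC hr =>
      huniq x hx (fun hxB => hxC (h hxB)) (hr.mono (delVerts_anti G h))⟩

lemma psdStep_iterate_mono (G : SimpleGraph V) {B C : Set V} (h : B ⊆ C) (t : ℕ) :
    (psdStep G)^[t] B ⊆ (psdStep G)^[t] C := by
  induction t generalizing B C with
  | zero => exact h
  | succ n ih =>
    rw [Function.iterate_succ_apply, Function.iterate_succ_apply]
    exact ih (psdStep_mono G h)

lemma IsPSDForcingSet.of_subset_psdStep {G : SimpleGraph V} {B C : Set V}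
    (hB : IsPSDForcingSet G B) (h : B ⊆ psdStep G C) : IsPSDForcingSet G C := by
  obtain ⟨t, ht⟩ := hB
  refine ⟨t + 1, eq_univ_of_univ_subset ?_⟩
  rw [Function.iterate_succ_apply, ← ht]
  exact psdStep_iterate_mono G h t

namespace PSDForce

variable {G : SimpleGraph V} {B : Set V} {v w : V}

lemma ne (hforce : PSDForce G B v w) : v ≠ w :=
  fun h => hforce.2.1 (h ▸ hforce.1)

lemma not_reachable_of_mem_compOf (hforce : PSDForce G B v w) {x : V}
    (hx : x ∈ compOf G B w) : ¬ (delVerts G ((B \ {v}) ∪ {w})).Reachable x v := by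
  obtain ⟨hvB, -, -, huniq⟩ := hforce
  -- abstracted so that `generalize` below leaves the `v` inside `B'` alone
  set B' := (B \ {v}) ∪ {w}
  rintro ⟨p⟩
  generalize hy : v = y at p
  induction p with
  | nil => exact hx.1 (hy ▸ hvB)
  | @cons a b _ hab p ih =>
    obtain ⟨haG, haB', hbB'⟩ := hab
    by_cases hbv : b = v
    · exact haB' (Or.inr (huniq a (hbv ▸ haG).symm hx.1 hx.2))
    · have hbB : b ∉ B := fun hb => hbB' (Or.inl ⟨hb, hbv⟩)
      have hba : (delVerts G B).Adj b a := ⟨haG.symm, hbB, hx.1⟩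
      exact ih ⟨hbB, hba.reachable.trans hx.2⟩ hy

lemma swap (hforce : PSDForce G B v w) : PSDForce G ((B \ {v}) ∪ {w}) w v := by
  refine ⟨Or.inr rfl, ?_, hforce.2.2.1.symm, fun x hx hxB' hr => ?_⟩
  · rintro (⟨-, hv⟩ | hv)
    exacts [hv rfl, hforce.ne hv]
  by_contra hxv
  have hxB : x ∉ B := fun hxB => hxB' (Or.inl ⟨hxB, hxv⟩)
  have hxw : (delVerts G B).Adj x w := ⟨hx.symm, hxB, hforce.2.1⟩
  exact hforce.not_reachable_of_mem_compOf ⟨hxB, hxw.reachable⟩ hr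

lemma subset_psdStep_migrate (hforce : PSDForce G B v w) :
    B ⊆ psdStep G ((B \ {v}) ∪ {w}) := by
  intro y hy
  by_cases hyv : y = v
  · exact Or.inr ⟨w, hyv ▸ hforce.swap⟩
  · exact Or.inl (Or.inl ⟨hy, hyv⟩)

end PSDForce

/-- single-vertex migration: if `B` is a PSD forcing set and `v → w` is a valid
initial PSD force for `B`, then `(B \ {v}) ∪ {w}` is a PSD forcing set. -/
theorem stmt2 (G : SimpleGraph V) (B : Set V) (v w : V)
    (hB : IsPSDForcingSet G B) (hforce : PSDForce G B v w) :
    IsPSDForcingSet G ((B \ {v}) ∪ {w}) :=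
  hB.of_subset_psdStep hforce.subset_psdStep_migrate
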